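/- arXiv:2508.10240 — 6 statements merged into one kernel-verified Lean document; each statement's English description precedes it below -/
import Mathlib

section
/- (Theorem 1.) Under the random coin toss assumption, the conditional probability that the first three children all have the same sex, given that the family has at least 3 children, satisfies μ((A ∩ B ∩ C) ∪ (Aᶜ ∩ Bᶜ ∩ Cᶜ) | N3) = p_M^3 · (μ(N2 | A)/μ(N2)) · (μ(N3 | N2 ∩ A ∩ B)/μ(N3 | N2)) + p_F^3 · (μ(N2 | Aᶜ)/μ(N2)) · (μ(N3 | N2 ∩ Aᶜ ∩ Bᶜ)/μ(N3 | N2)). -/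
open MeasureTheory

/-- Conditional probability: μ(X | Y) = μ(X ∩ Y) / μ(Y), as a real number. -/
noncomputable def cp {Ω : Type*} [MeasurableSpace Ω] (μ : Measure Ω) (X Y : Set Ω) : ℝ :=
  (μ (X ∩ Y)).toReal / (μ Y).toReal


lemma cp_mul {Ω : Type*} [MeasurableSpace Ω] (μ : Measure Ω) {X Y : Set Ω} {p : ℝ}
    (h : cp μ X Y = p) (hpos : 0 < (μ Y).toReal) :
    (μ (X ∩ Y)).toReal = p * (μ Y).toReal := by
  unfold cp at h
  exact (div_eq_iff hpos.ne').mp h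

lemma compl_inter {Ω : Type*} [MeasurableSpace Ω] (μ : Measure Ω) [IsFiniteMeasure μ]
    {X : Set Ω} (hX : MeasurableSet X) (T : Set Ω) :
    (μ (Xᶜ ∩ T)).toReal = (μ T).toReal - (μ (X ∩ T)).toReal := by
  have h := measure_inter_add_diff (μ := μ) T hX
  have hd : T \ X = Xᶜ ∩ T := by ext x; simp [Set.mem_diff]; tauto
  rw [hd] at h
  have h2 : (μ (T ∩ X)).toReal + (μ (Xᶜ ∩ T)).toReal = (μ T).toReal := by
    rw [← ENNReal.toReal_add (measure_ne_top μ _) (measure_ne_top μ _), h]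
  rw [Set.inter_comm T X] at h2; linarith

/-- Theorem 1: under the random coin toss assumption,
μ((A∩B∩C) ∪ (Aᶜ∩Bᶜ∩Cᶜ) | N3)
  = p_M^3 · (μ(N2|A)/μ(N2)) · (μ(N3|N2∩A∩B)/μ(N3|N2))
  + p_F^3 · (μ(N2|Aᶜ)/μ(N2)) · (μ(N3|N2∩Aᶜ∩Bᶜ)/μ(N3|N2)). -/
theorem stmt_1 {Ω : Type*} [MeasurableSpace Ω] (μ : Measure Ω) [IsProbabilityMeasure μ]
    (A B C N2 N3 : Set Ω)
    (hAm : MeasurableSet A) (hBm : MeasurableSet B) (hCm : MeasurableSet C)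
    (hN2m : MeasurableSet N2) (hN3m : MeasurableSet N3)
    (hsub : N3 ⊆ N2)
    (pM pF : ℝ) (hpM0 : 0 < pM) (hpM1 : pM < 1) (hpF : pF = 1 - pM)
    -- Assumption 1 (random coin toss):
    (h1 : (μ A).toReal = pM)
    (h2a : cp μ B (N2 ∩ A) = pM) (h2b : cp μ B (N2 ∩ Aᶜ) = pM)
    (h3a : cp μ C (N3 ∩ (A ∩ B)) = pM) (h3b : cp μ C (N3 ∩ (A ∩ Bᶜ)) = pM)
    (h3c : cp μ C (N3 ∩ (Aᶜ ∩ B)) = pM) (h3d : cp μ C (N3 ∩ (Aᶜ ∩ Bᶜ)) = pM)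
    -- positivity of all conditioning events appearing:
    (posA : 0 < (μ A).toReal) (posAc : 0 < (μ Aᶜ).toReal)
    (posN2 : 0 < (μ N2).toReal) (posN3 : 0 < (μ N3).toReal)
    (posN2A : 0 < (μ (N2 ∩ A)).toReal) (posN2Ac : 0 < (μ (N2 ∩ Aᶜ)).toReal)
    (posN2AB : 0 < (μ (N2 ∩ A ∩ B)).toReal) (posN2AcBc : 0 < (μ (N2 ∩ Aᶜ ∩ Bᶜ)).toReal)
    (posN3AB : 0 < (μ (N3 ∩ (A ∩ B))).toReal) (posN3ABc : 0 < (μ (N3 ∩ (A ∩ Bᶜ))).toReal)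
    (posN3AcB : 0 < (μ (N3 ∩ (Aᶜ ∩ B))).toReal) (posN3AcBc : 0 < (μ (N3 ∩ (Aᶜ ∩ Bᶜ))).toReal) :
    cp μ ((A ∩ B ∩ C) ∪ (Aᶜ ∩ Bᶜ ∩ Cᶜ)) N3 =
      pM ^ 3 * (cp μ N2 A / (μ N2).toReal) * (cp μ N3 (N2 ∩ A ∩ B) / cp μ N3 N2)
      + pF ^ 3 * (cp μ N2 Aᶜ / (μ N2).toReal) * (cp μ N3 (N2 ∩ Aᶜ ∩ Bᶜ) / cp μ N3 N2) := by
  have hpF0 : 0 < pF := by rw [hpF]; linarith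
  -- basic real values
  have hAc : (μ Aᶜ).toReal = pF := by
    have h := measure_add_measure_compl (μ := μ) hAm
    have h2 : (μ A).toReal + (μ Aᶜ).toReal = 1 := by
      rw [← ENNReal.toReal_add (measure_ne_top μ _) (measure_ne_top μ _), h]; simp
    rw [h1] at h2; linarith
  have hN2A : (μ (N2 ∩ A)).toReal = cp μ N2 A * pM := by
    have := cp_mul μ (rfl : cp μ N2 A = cp μ N2 A) posA
    rw [this, h1]
  have hN2Ac : (μ (N2 ∩ Aᶜ)).toReal = cp μ N2 Aᶜ * pF := by
    have := cp_mul μ (rfl : cp μ N2 Aᶜ = cp μ N2 Aᶜ) posAc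
    rw [this, hAc]
  have hN2AB : (μ (N2 ∩ A ∩ B)).toReal = pM * (μ (N2 ∩ A)).toReal := by
    have hs : N2 ∩ A ∩ B = B ∩ (N2 ∩ A) := by ext x; simp; tauto
    rw [hs]; exact cp_mul μ h2a posN2A
  have hN2AcBc : (μ (N2 ∩ Aᶜ ∩ Bᶜ)).toReal = pF * (μ (N2 ∩ Aᶜ)).toReal := by
    have hs : N2 ∩ Aᶜ ∩ Bᶜ = Bᶜ ∩ (N2 ∩ Aᶜ) := by ext x; simp; tauto
    rw [hs, compl_inter μ hBm, cp_mul μ h2b posN2Ac, hpF]; ring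
  have hN3AB : (μ (N3 ∩ (A ∩ B))).toReal
      = cp μ N3 (N2 ∩ A ∩ B) * (μ (N2 ∩ A ∩ B)).toReal := by
    have hs : N3 ∩ (N2 ∩ A ∩ B) = N3 ∩ (A ∩ B) := by
      ext x; simp only [Set.mem_inter_iff]
      constructor
      · rintro ⟨h3, ⟨_, ha⟩, hb⟩; exact ⟨h3, ha, hb⟩
      · rintro ⟨h3, ha, hb⟩; exact ⟨h3, ⟨hsub h3, ha⟩, hb⟩
    have := cp_mul μ (rfl : cp μ N3 (N2 ∩ A ∩ B) = _) posN2AB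
    rw [hs] at this; exact this
  have hN3AcBc : (μ (N3 ∩ (Aᶜ ∩ Bᶜ))).toReal
      = cp μ N3 (N2 ∩ Aᶜ ∩ Bᶜ) * (μ (N2 ∩ Aᶜ ∩ Bᶜ)).toReal := by
    have hs : N3 ∩ (N2 ∩ Aᶜ ∩ Bᶜ) = N3 ∩ (Aᶜ ∩ Bᶜ) := by
      ext x; simp only [Set.mem_inter_iff]
      constructor
      · rintro ⟨h3, ⟨_, ha⟩, hb⟩; exact ⟨h3, ha, hb⟩
      · rintro ⟨h3, ha, hb⟩; exact ⟨h3, ⟨hsub h3, ha⟩, hb⟩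
    have := cp_mul μ (rfl : cp μ N3 (N2 ∩ Aᶜ ∩ Bᶜ) = _) posN2AcBc
    rw [hs] at this; exact this
  have hT1 : (μ ((A ∩ B ∩ C) ∩ N3)).toReal = pM * (μ (N3 ∩ (A ∩ B))).toReal := by
    have hs : (A ∩ B ∩ C) ∩ N3 = C ∩ (N3 ∩ (A ∩ B)) := by ext x; simp; tauto
    rw [hs]; exact cp_mul μ h3a posN3AB
  have hT2 : (μ ((Aᶜ ∩ Bᶜ ∩ Cᶜ) ∩ N3)).toReal = pF * (μ (N3 ∩ (Aᶜ ∩ Bᶜ))).toReal := by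
    have hs : (Aᶜ ∩ Bᶜ ∩ Cᶜ) ∩ N3 = Cᶜ ∩ (N3 ∩ (Aᶜ ∩ Bᶜ)) := by ext x; simp; tauto
    rw [hs, compl_inter μ hCm, cp_mul μ h3d posN3AcBc, hpF]; ring
  have hUnion : (μ (((A ∩ B ∩ C) ∪ (Aᶜ ∩ Bᶜ ∩ Cᶜ)) ∩ N3)).toReal
      = (μ ((A ∩ B ∩ C) ∩ N3)).toReal + (μ ((Aᶜ ∩ Bᶜ ∩ Cᶜ) ∩ N3)).toReal := by
    rw [Set.union_inter_distrib_right]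
    have hdisj : Disjoint ((A ∩ B ∩ C) ∩ N3) ((Aᶜ ∩ Bᶜ ∩ Cᶜ) ∩ N3) := by
      apply Set.disjoint_left.mpr
      rintro x ⟨⟨⟨ha, _⟩, _⟩, _⟩ ⟨⟨⟨ha', _⟩, _⟩, _⟩
      exact ha' ha
    rw [measure_union hdisj (((hAm.compl.inter hBm.compl).inter hCm.compl).inter hN3m),
      ENNReal.toReal_add (measure_ne_top μ _) (measure_ne_top μ _)]
  have hN3N2 : cp μ N3 N2 = (μ N3).toReal / (μ N2).toReal := by
    unfold cp
    rw [Set.inter_eq_left.mpr hsub]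
  have hcpN3N2pos : (0:ℝ) < (μ N3).toReal / (μ N2).toReal := div_pos posN3 posN2
  rw [hN3N2]
  set x := cp μ N2 A with hxdef
  set y := cp μ N3 (N2 ∩ A ∩ B) with hydef
  set u := cp μ N2 Aᶜ with hudef
  set v := cp μ N3 (N2 ∩ Aᶜ ∩ Bᶜ) with hvdef
  unfold cp
  rw [hUnion, hT1, hT2, hN3AB, hN3AcBc, hN2AB, hN2AcBc, hN2A, hN2Ac]
  field_simp
end

section
/- Under the random coin toss assumption, Assumption 3, and Assumption 4, the conditional probability of having at least 3 children given at least 2 children equals μ(N3 | N2) = p_S·(p_M^2 + p_F^2) + 2·p_D·p_M·p_F. -/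
open MeasureTheory

/-- Under the random coin toss assumption, Assumption 3, and Assumption 4,
μ(N3 | N2) = p_S·(p_M² + p_F²) + 2·p_D·p_M·p_F. -/
theorem stmt_4 {Ω : Type*} [MeasurableSpace Ω] (μ : Measure Ω) [IsProbabilityMeasure μ]
    (A B N2 N3 : Set Ω)
    (hAm : MeasurableSet A) (hBm : MeasurableSet B)
    (hN2m : MeasurableSet N2) (hN3m : MeasurableSet N3)
    (hsub : N3 ⊆ N2)
    (pM pF : ℝ) (hpM0 : 0 < pM) (hpM1 : pM < 1) (hpF : pF = 1 - pM)
    -- Assumption 1 (random coin toss):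
    (h1 : (μ A).toReal = pM)
    (h2a : cp μ B (N2 ∩ A) = pM) (h2b : cp μ B (N2 ∩ Aᶜ) = pM)
    -- Assumption 3:
    (h3 : cp μ N2 A = (μ N2).toReal)
    -- Assumption 4:
    (pS pD : ℝ) (hpS0 : 0 < pS) (hpS1 : pS ≤ 1) (hpD0 : 0 < pD) (hpD1 : pD ≤ 1)
    (h4a : cp μ N3 (N2 ∩ A ∩ B) = pS) (h4b : cp μ N3 (N2 ∩ Aᶜ ∩ Bᶜ) = pS)
    (h4c : cp μ N3 (N2 ∩ A ∩ Bᶜ) = pD) (h4d : cp μ N3 (N2 ∩ Aᶜ ∩ B) = pD)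
    -- positivity of all conditioning events appearing:
    (posA : 0 < (μ A).toReal) (posN2 : 0 < (μ N2).toReal)
    (posN2A : 0 < (μ (N2 ∩ A)).toReal) (posN2Ac : 0 < (μ (N2 ∩ Aᶜ)).toReal)
    (posN2AB : 0 < (μ (N2 ∩ A ∩ B)).toReal) (posN2AcBc : 0 < (μ (N2 ∩ Aᶜ ∩ Bᶜ)).toReal)
    (posN2ABc : 0 < (μ (N2 ∩ A ∩ Bᶜ)).toReal) (posN2AcB : 0 < (μ (N2 ∩ Aᶜ ∩ B)).toReal) :
    cp μ N3 N2 = pS * (pM ^ 2 + pF ^ 2) + 2 * pD * pM * pF := by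
  classical
  -- splitting lemma
  have split : ∀ (s t : Set Ω), MeasurableSet t →
      (μ s).toReal = (μ (s ∩ t)).toReal + (μ (s ∩ tᶜ)).toReal := by
    intro s t ht
    have h := measure_inter_add_diff (μ := μ) s ht
    have hfin1 : μ (s ∩ t) ≠ ⊤ := measure_ne_top μ _
    have hfin2 : μ (s \ t) ≠ ⊤ := measure_ne_top μ _
    have : (μ s).toReal = (μ (s ∩ t)).toReal + (μ (s \ t)).toReal := by
      rw [← h, ENNReal.toReal_add hfin1 hfin2]
    rwa [Set.diff_eq] at this
  -- from cp equalities to products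
  have cp_eq : ∀ (X Y : Set Ω) (r : ℝ), cp μ X Y = r → 0 < (μ Y).toReal →
      (μ (X ∩ Y)).toReal = r * (μ Y).toReal := by
    intro X Y r h hpos
    have := h
    unfold cp at this
    field_simp at this
    linarith [this]
  -- m(N2 ∩ A) = pM * m(N2)
  have hN2A : (μ (N2 ∩ A)).toReal = pM * (μ N2).toReal := by
    have := cp_eq N2 A ((μ N2).toReal) h3 posA
    rw [h1] at this
    linarith
  have hN2Ac : (μ (N2 ∩ Aᶜ)).toReal = pF * (μ N2).toReal := by
    have := split N2 A hAm
    rw [hpF]; linarith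
  -- B slices
  have hAB : (μ (N2 ∩ A ∩ B)).toReal = pM * (μ (N2 ∩ A)).toReal := by
    have := cp_eq B (N2 ∩ A) pM h2a posN2A
    rw [show B ∩ (N2 ∩ A) = N2 ∩ A ∩ B from Set.inter_comm _ _] at this
    exact this
  have hABc : (μ (N2 ∩ A ∩ Bᶜ)).toReal = pF * (μ (N2 ∩ A)).toReal := by
    have := split (N2 ∩ A) B hBm
    rw [hpF]; linarith
  have hAcB : (μ (N2 ∩ Aᶜ ∩ B)).toReal = pM * (μ (N2 ∩ Aᶜ)).toReal := by
    have := cp_eq B (N2 ∩ Aᶜ) pM h2b posN2Ac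
    rw [show B ∩ (N2 ∩ Aᶜ) = N2 ∩ Aᶜ ∩ B from Set.inter_comm _ _] at this
    exact this
  have hAcBc : (μ (N2 ∩ Aᶜ ∩ Bᶜ)).toReal = pF * (μ (N2 ∩ Aᶜ)).toReal := by
    have := split (N2 ∩ Aᶜ) B hBm
    rw [hpF]; linarith
  -- N3 pieces
  have e1 := cp_eq N3 (N2 ∩ A ∩ B) pS h4a posN2AB
  have e2 := cp_eq N3 (N2 ∩ Aᶜ ∩ Bᶜ) pS h4b posN2AcBc
  have e3 := cp_eq N3 (N2 ∩ A ∩ Bᶜ) pD h4c posN2ABc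
  have e4 := cp_eq N3 (N2 ∩ Aᶜ ∩ B) pD h4d posN2AcB
  -- split N3 ∩ N2
  have s1 := split (N3 ∩ N2) A hAm
  have s2 := split (N3 ∩ N2 ∩ A) B hBm
  have s3 := split (N3 ∩ N2 ∩ Aᶜ) B hBm
  have r1 : N3 ∩ N2 ∩ A ∩ B = N3 ∩ (N2 ∩ A ∩ B) := by ext x; simp; tauto
  have r2 : N3 ∩ N2 ∩ A ∩ Bᶜ = N3 ∩ (N2 ∩ A ∩ Bᶜ) := by ext x; simp; tauto
  have r3 : N3 ∩ N2 ∩ Aᶜ ∩ B = N3 ∩ (N2 ∩ Aᶜ ∩ B) := by ext x; simp; tauto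
  have r4 : N3 ∩ N2 ∩ Aᶜ ∩ Bᶜ = N3 ∩ (N2 ∩ Aᶜ ∩ Bᶜ) := by ext x; simp; tauto
  rw [r1] at s2; rw [r2] at s2; rw [r3] at s3; rw [r4] at s3
  have total : (μ (N3 ∩ N2)).toReal =
      (pS * (pM ^ 2 + pF ^ 2) + 2 * pD * pM * pF) * (μ N2).toReal := by
    rw [s1, s2, s3, e1, e2, e3, e4, hAB, hABc, hAcB, hAcBc, hN2A, hN2Ac]
    ring
  unfold cp
  rw [total]
  field_simp
end

section
/- (Corollary 1, inflation.) Under the random coin toss assumption, Assumption 3, Assumption 4, and the mixed-sex preference assumption p_S > p_D, the inflation factor satisfies 1/(2·p_F·p_M·(p_D/p_S) + p_F^2 + p_M^2) > 1, and consequently μ((A ∩ B ∩ C) ∪ (Aᶜ ∩ Bᶜ ∩ Cᶜ) | N3) > p_M^3 + p_F^3. -/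
set_option maxHeartbeats 1000000


open MeasureTheory

private lemma split_aux {Ω : Type*} [MeasurableSpace Ω] (μ : Measure Ω) [IsFiniteMeasure μ]
    (s t : Set Ω) (ht : MeasurableSet t) :
    (μ s).toReal = (μ (s ∩ t)).toReal + (μ (s ∩ tᶜ)).toReal := by
  rw [← ENNReal.toReal_add (measure_ne_top _ _) (measure_ne_top _ _), ← Set.diff_eq,
    measure_inter_add_diff s ht]

private lemma cp_eq {Ω : Type*} [MeasurableSpace Ω] {μ : Measure Ω} {X Y : Set Ω} {p : ℝ}
    (h : cp μ X Y = p) (hY : 0 < (μ Y).toReal) :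
    (μ (X ∩ Y)).toReal = p * (μ Y).toReal := by
  unfold cp at h
  exact (div_eq_iff hY.ne').mp h


private lemma D_lt_one {pM pF r : ℝ} (hpM0 : 0 < pM) (hpF0 : 0 < pF)
    (hpF : pF = 1 - pM) (hr : r < 1) :
    2 * pF * pM * r + pF ^ 2 + pM ^ 2 < 1 := by
  have key : 1 - (2 * pF * pM * r + pF ^ 2 + pM ^ 2) = 2 * pF * pM * (1 - r) := by
    subst hpF; ring
  linarith [mul_pos (mul_pos (by linarith : (0:ℝ) < 2 * pF) hpM0) (by linarith : 0 < 1 - r)]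

private lemma key_ineq {pM pF pS pD n2 : ℝ} (hpM0 : 0 < pM) (hpF0 : 0 < pF)
    (hpF : pF = 1 - pM) (hn2 : 0 < n2) (h2' : pD < pS) :
    (pM ^ 3 + pF ^ 3) *
        (pS * (pM * (pM * n2)) + pD * (pF * (pM * n2)) + pD * (pM * (pF * n2))
          + pS * (pF * (pF * n2))) <
      pM * (pS * (pM * (pM * n2))) + pF * (pS * (pF * (pF * n2))) := by
  have key : pM * (pS * (pM * (pM * n2))) + pF * (pS * (pF * (pF * n2))) -
      (pM ^ 3 + pF ^ 3) *
        (pS * (pM * (pM * n2)) + pD * (pF * (pM * n2)) + pD * (pM * (pF * n2))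
          + pS * (pF * (pF * n2))) =
      n2 * ((pM ^ 3 + pF ^ 3) * (2 * pM * pF * (pS - pD))) := by
    subst hpF; ring
  have hpos : 0 < n2 * ((pM ^ 3 + pF ^ 3) * (2 * pM * pF * (pS - pD))) := by
    apply mul_pos hn2
    apply mul_pos (by positivity)
    apply mul_pos (by positivity)
    linarith
  linarith

/-- Corollary 1, inflation: under the random coin toss assumption,
Assumptions 3 and 4, and mixed-sex preference p_S > p_D, the inflation factor exceeds 1
and hence μ((A∩B∩C) ∪ (Aᶜ∩Bᶜ∩Cᶜ) | N3) > p_M³ + p_F³. -/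
theorem stmt_6 {Ω : Type*} [MeasurableSpace Ω] (μ : Measure Ω) [IsProbabilityMeasure μ]
(A B C N2 N3 : Set Ω)
    (hAm : MeasurableSet A) (hBm : MeasurableSet B) (hCm : MeasurableSet C)
    (hN2m : MeasurableSet N2) (hN3m : MeasurableSet N3)
    (hsub : N3 ⊆ N2)
    (pM pF : ℝ) (hpM0 : 0 < pM) (hpM1 : pM < 1) (hpF : pF = 1 - pM)
    -- Assumption 1 (random coin toss):
    (h1 : (μ A).toReal = pM)
    (h2a : cp μ B (N2 ∩ A) = pM) (h2b : cp μ B (N2 ∩ Aᶜ) = pM)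
    (h3a : cp μ C (N3 ∩ (A ∩ B)) = pM) (h3b : cp μ C (N3 ∩ (A ∩ Bᶜ)) = pM)
    (h3c : cp μ C (N3 ∩ (Aᶜ ∩ B)) = pM) (h3d : cp μ C (N3 ∩ (Aᶜ ∩ Bᶜ)) = pM)
    -- Assumption 3:
    (h3' : cp μ N2 A = (μ N2).toReal)
    -- Assumption 4:
    (pS pD : ℝ) (hpS0 : 0 < pS) (hpS1 : pS ≤ 1) (hpD0 : 0 < pD) (hpD1 : pD ≤ 1)
    (h4a : cp μ N3 (N2 ∩ A ∩ B) = pS) (h4b : cp μ N3 (N2 ∩ Aᶜ ∩ Bᶜ) = pS)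
    (h4c : cp μ N3 (N2 ∩ A ∩ Bᶜ) = pD) (h4d : cp μ N3 (N2 ∩ Aᶜ ∩ B) = pD)
    -- positivity of all conditioning events appearing:
    (posA : 0 < (μ A).toReal) (posN2 : 0 < (μ N2).toReal) (posN3 : 0 < (μ N3).toReal)
    (posN2A : 0 < (μ (N2 ∩ A)).toReal) (posN2Ac : 0 < (μ (N2 ∩ Aᶜ)).toReal)
    (posN2AB : 0 < (μ (N2 ∩ A ∩ B)).toReal) (posN2AcBc : 0 < (μ (N2 ∩ Aᶜ ∩ Bᶜ)).toReal)
    (posN2ABc : 0 < (μ (N2 ∩ A ∩ Bᶜ)).toReal) (posN2AcB : 0 < (μ (N2 ∩ Aᶜ ∩ B)).toReal)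
    (posN3AB : 0 < (μ (N3 ∩ (A ∩ B))).toReal) (posN3ABc : 0 < (μ (N3 ∩ (A ∩ Bᶜ))).toReal)
    (posN3AcB : 0 < (μ (N3 ∩ (Aᶜ ∩ B))).toReal) (posN3AcBc : 0 < (μ (N3 ∩ (Aᶜ ∩ Bᶜ))).toReal)
    -- Assumption 2 (mixed-sex preference):
    (h2' : pS > pD) :
    1 / (2 * pF * pM * (pD / pS) + pF ^ 2 + pM ^ 2) > 1 ∧
    cp μ ((A ∩ B ∩ C) ∪ (Aᶜ ∩ Bᶜ ∩ Cᶜ)) N3 > pM ^ 3 + pF ^ 3 := by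
  have hpF0 : 0 < pF := by rw [hpF]; linarith
  set n2 := (μ N2).toReal with hn2
  -- μ(N2 ∩ A) = pM * n2
  have e1 : (μ (N2 ∩ A)).toReal = pM * n2 := by
    have := cp_eq h3' posA; rw [h1] at this; linarith
  -- μ(N2 ∩ Aᶜ) = pF * n2
  have e2 : (μ (N2 ∩ Aᶜ)).toReal = pF * n2 := by
    have := split_aux μ N2 A hAm
    rw [hpF]; rw [e1] at this; linarith
  -- μ(N2 ∩ A ∩ B) = pM * (pM * n2)
  have e3 : (μ (N2 ∩ A ∩ B)).toReal = pM * (pM * n2) := by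
    have h := cp_eq h2a posN2A
    have hs : B ∩ (N2 ∩ A) = N2 ∩ A ∩ B := by
      ext x; simp only [Set.mem_inter_iff]; tauto
    rw [hs, e1] at h; linarith
  have e4 : (μ (N2 ∩ A ∩ Bᶜ)).toReal = pF * (pM * n2) := by
    have := split_aux μ (N2 ∩ A) B hBm
    rw [e1, e3] at this; rw [hpF]; linarith
  have e5 : (μ (N2 ∩ Aᶜ ∩ B)).toReal = pM * (pF * n2) := by
    have h := cp_eq h2b posN2Ac
    have hs : B ∩ (N2 ∩ Aᶜ) = N2 ∩ Aᶜ ∩ B := by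
      ext x; simp only [Set.mem_inter_iff]; tauto
    rw [hs, e2] at h; linarith
  have e6 : (μ (N2 ∩ Aᶜ ∩ Bᶜ)).toReal = pF * (pF * n2) := by
    have := split_aux μ (N2 ∩ Aᶜ) B hBm
    have hr : pF * (pF * n2) = pF * n2 - pM * (pF * n2) := by rw [hpF]; ring
    rw [e2, e5] at this; linarith
  -- N3 pieces
  have s1 : N3 ∩ (A ∩ B) = N3 ∩ (N2 ∩ A ∩ B) := by
    ext x; simp only [Set.mem_inter_iff]
    exact ⟨fun h => ⟨h.1, ⟨hsub h.1, h.2.1⟩, h.2.2⟩, fun h => ⟨h.1, h.2.1.2, h.2.2⟩⟩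
  have s2 : N3 ∩ (A ∩ Bᶜ) = N3 ∩ (N2 ∩ A ∩ Bᶜ) := by
    ext x; simp only [Set.mem_inter_iff, Set.mem_compl_iff]
    exact ⟨fun h => ⟨h.1, ⟨hsub h.1, h.2.1⟩, h.2.2⟩, fun h => ⟨h.1, h.2.1.2, h.2.2⟩⟩
  have s3 : N3 ∩ (Aᶜ ∩ B) = N3 ∩ (N2 ∩ Aᶜ ∩ B) := by
    ext x; simp only [Set.mem_inter_iff, Set.mem_compl_iff]
    exact ⟨fun h => ⟨h.1, ⟨hsub h.1, h.2.1⟩, h.2.2⟩, fun h => ⟨h.1, h.2.1.2, h.2.2⟩⟩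
  have s4 : N3 ∩ (Aᶜ ∩ Bᶜ) = N3 ∩ (N2 ∩ Aᶜ ∩ Bᶜ) := by
    ext x; simp only [Set.mem_inter_iff, Set.mem_compl_iff]
    exact ⟨fun h => ⟨h.1, ⟨hsub h.1, h.2.1⟩, h.2.2⟩, fun h => ⟨h.1, h.2.1.2, h.2.2⟩⟩
  have f1 : (μ (N3 ∩ (A ∩ B))).toReal = pS * (pM * (pM * n2)) := by
    have h := cp_eq h4a posN2AB; rw [e3] at h; rw [s1]; linarith
  have f2 : (μ (N3 ∩ (A ∩ Bᶜ))).toReal = pD * (pF * (pM * n2)) := by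
    have h := cp_eq h4c posN2ABc; rw [e4] at h; rw [s2]; linarith
  have f3 : (μ (N3 ∩ (Aᶜ ∩ B))).toReal = pD * (pM * (pF * n2)) := by
    have h := cp_eq h4d posN2AcB; rw [e5] at h; rw [s3]; linarith
  have f4 : (μ (N3 ∩ (Aᶜ ∩ Bᶜ))).toReal = pS * (pF * (pF * n2)) := by
    have h := cp_eq h4b posN2AcBc; rw [e6] at h; rw [s4]; linarith
  -- total μ(N3)
  have g0 : (μ N3).toReal =
      (μ (N3 ∩ (A ∩ B))).toReal + (μ (N3 ∩ (A ∩ Bᶜ))).toReal +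
      (μ (N3 ∩ (Aᶜ ∩ B))).toReal + (μ (N3 ∩ (Aᶜ ∩ Bᶜ))).toReal := by
    have hA := split_aux μ N3 A hAm
    have hAB := split_aux μ (N3 ∩ A) B hBm
    have hAcB := split_aux μ (N3 ∩ Aᶜ) B hBm
    have r1 : N3 ∩ A ∩ B = N3 ∩ (A ∩ B) := by rw [Set.inter_assoc]
    have r2 : N3 ∩ A ∩ Bᶜ = N3 ∩ (A ∩ Bᶜ) := by rw [Set.inter_assoc]
    have r3 : N3 ∩ Aᶜ ∩ B = N3 ∩ (Aᶜ ∩ B) := by rw [Set.inter_assoc]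
    have r4 : N3 ∩ Aᶜ ∩ Bᶜ = N3 ∩ (Aᶜ ∩ Bᶜ) := by rw [Set.inter_assoc]
    rw [r1, r2] at hAB; rw [r3, r4] at hAcB; linarith
  have gN3 : (μ N3).toReal =
      pS * (pM * (pM * n2)) + pD * (pF * (pM * n2)) + pD * (pM * (pF * n2))
        + pS * (pF * (pF * n2)) := by
    rw [g0, f1, f2, f3, f4]
  -- numerator pieces
  have t1 : (μ (A ∩ B ∩ C ∩ N3)).toReal = pM * (pS * (pM * (pM * n2))) := by
    have h := cp_eq h3a posN3AB
    have hs : C ∩ (N3 ∩ (A ∩ B)) = A ∩ B ∩ C ∩ N3 := by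
      ext x; simp only [Set.mem_inter_iff]; tauto
    rw [hs, f1] at h; linarith
  have t2 : (μ (Aᶜ ∩ Bᶜ ∩ Cᶜ ∩ N3)).toReal = pF * (pS * (pF * (pF * n2))) := by
    have h := cp_eq h3d posN3AcBc
    have hsplit := split_aux μ (N3 ∩ (Aᶜ ∩ Bᶜ)) C hCm
    have hs1 : C ∩ (N3 ∩ (Aᶜ ∩ Bᶜ)) = N3 ∩ (Aᶜ ∩ Bᶜ) ∩ C := by
      ext x; simp only [Set.mem_inter_iff]; tauto
    have hs2 : N3 ∩ (Aᶜ ∩ Bᶜ) ∩ Cᶜ = Aᶜ ∩ Bᶜ ∩ Cᶜ ∩ N3 := by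
      ext x; simp only [Set.mem_inter_iff, Set.mem_compl_iff]; tauto
    rw [hs1] at h
    rw [h, hs2, f4] at hsplit
    have hr : pF * (pS * (pF * (pF * n2))) =
        pS * (pF * (pF * n2)) - pM * (pS * (pF * (pF * n2))) := by rw [hpF]; ring
    linarith
  -- union split
  have hnum : (μ (((A ∩ B ∩ C) ∪ (Aᶜ ∩ Bᶜ ∩ Cᶜ)) ∩ N3)).toReal =
      (μ (A ∩ B ∩ C ∩ N3)).toReal + (μ (Aᶜ ∩ Bᶜ ∩ Cᶜ ∩ N3)).toReal := by
    have hunion : ((A ∩ B ∩ C) ∪ (Aᶜ ∩ Bᶜ ∩ Cᶜ)) ∩ N3 =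
        (A ∩ B ∩ C ∩ N3) ∪ (Aᶜ ∩ Bᶜ ∩ Cᶜ ∩ N3) := by
      rw [Set.union_inter_distrib_right]
    have hdisj : Disjoint (A ∩ B ∩ C ∩ N3) (Aᶜ ∩ Bᶜ ∩ Cᶜ ∩ N3) := by
      rw [Set.disjoint_left]
      intro x hx hx'
      exact hx'.1.1.1 hx.1.1.1
    have hm2 : MeasurableSet (Aᶜ ∩ Bᶜ ∩ Cᶜ ∩ N3) :=
      (((hAm.compl.inter hBm.compl).inter hCm.compl).inter hN3m)
    rw [hunion, measure_union hdisj hm2,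
      ENNReal.toReal_add (measure_ne_top _ _) (measure_ne_top _ _)]
  -- Part 1
  have hDS : pD / pS < 1 := (div_lt_one hpS0).mpr h2'
  have hDS0 : 0 < pD / pS := div_pos hpD0 hpS0
  have hD0 : 0 < 2 * pF * pM * (pD / pS) + pF ^ 2 + pM ^ 2 := by positivity
  have hD1 : 2 * pF * pM * (pD / pS) + pF ^ 2 + pM ^ 2 < 1 := by
    exact D_lt_one hpM0 hpF0 hpF hDS
  constructor
  · rw [gt_iff_lt, lt_div_iff₀ hD0]; linarith
  · unfold cp
    rw [hnum, t1, t2, gN3, gt_iff_lt, lt_div_iff₀]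
    · exact key_ineq hpM0 hpF0 hpF posN2 h2'
    · rw [← gN3]; exact posN3
end

section
/- (Conditioning on exactly 3 children.) Under the random coin toss assumption, writing E3 = N3 \ N4 for the event that the family has exactly 3 children, the conditional probability that the first three children are all male given exactly 3 children equals μ(A ∩ B ∩ C | E3) = p_M^3 · (μ(N2 | A)/μ(N2)) · (μ(N3 | N2 ∩ A ∩ B)/μ(N3 | N2)) · (μ(E3 | N3 ∩ A ∩ B ∩ C)/μ(E3 | N3)). -/
open MeasureTheory

/-- conditioning on exactly 3 children: under the random coin toss assumption,
with E3 = N3 \ N4,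
μ(A∩B∩C | E3) = p_M³ · (μ(N2|A)/μ(N2)) · (μ(N3|N2∩A∩B)/μ(N3|N2))
                      · (μ(E3|N3∩A∩B∩C)/μ(E3|N3)). -/
theorem stmt_7 {Ω : Type*} [MeasurableSpace Ω] (μ : Measure Ω) [IsProbabilityMeasure μ]
    (A B C N2 N3 N4 : Set Ω)
    (hAm : MeasurableSet A) (hBm : MeasurableSet B) (hCm : MeasurableSet C)
    (hN2m : MeasurableSet N2) (hN3m : MeasurableSet N3) (hN4m : MeasurableSet N4)
    (hsub32 : N3 ⊆ N2) (hsub43 : N4 ⊆ N3)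
    (pM : ℝ) (hpM0 : 0 < pM) (hpM1 : pM < 1)
    -- Assumption 1 (random coin toss):
    (h1 : (μ A).toReal = pM)
    (h2a : cp μ B (N2 ∩ A) = pM) (h2b : cp μ B (N2 ∩ Aᶜ) = pM)
    (h3a : cp μ C (N3 ∩ (A ∩ B)) = pM) (h3b : cp μ C (N3 ∩ (A ∩ Bᶜ)) = pM)
    (h3c : cp μ C (N3 ∩ (Aᶜ ∩ B)) = pM) (h3d : cp μ C (N3 ∩ (Aᶜ ∩ Bᶜ)) = pM)
    -- positivity of all conditioning events appearing:
    (posA : 0 < (μ A).toReal) (posN2 : 0 < (μ N2).toReal) (posN3 : 0 < (μ N3).toReal)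
    (posE3 : 0 < (μ (N3 \ N4)).toReal)
    (posN2A : 0 < (μ (N2 ∩ A)).toReal) (posN2Ac : 0 < (μ (N2 ∩ Aᶜ)).toReal)
    (posN2AB : 0 < (μ (N2 ∩ A ∩ B)).toReal)
    (posN3AB : 0 < (μ (N3 ∩ (A ∩ B))).toReal) (posN3ABc : 0 < (μ (N3 ∩ (A ∩ Bᶜ))).toReal)
    (posN3AcB : 0 < (μ (N3 ∩ (Aᶜ ∩ B))).toReal) (posN3AcBc : 0 < (μ (N3 ∩ (Aᶜ ∩ Bᶜ))).toReal)
    (posN3ABC : 0 < (μ (N3 ∩ A ∩ B ∩ C)).toReal) :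
    cp μ (A ∩ B ∩ C) (N3 \ N4) =
      pM ^ 3 * (cp μ N2 A / (μ N2).toReal) * (cp μ N3 (N2 ∩ A ∩ B) / cp μ N3 N2)
        * (cp μ (N3 \ N4) (N3 ∩ A ∩ B ∩ C) / cp μ (N3 \ N4) N3) := by
  have hS1 : (N3 \ N4) ∩ (N3 ∩ A ∩ B ∩ C) = A ∩ B ∩ C ∩ (N3 \ N4) := by
    ext x; simp only [Set.mem_inter_iff, Set.mem_diff]; tauto
  have hS3 : N3 ∩ (N2 ∩ A ∩ B) = N3 ∩ (A ∩ B) := by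
    ext x
    simp only [Set.mem_inter_iff]
    exact ⟨fun ⟨h, ⟨_, ha⟩, hb⟩ => ⟨h, ha, hb⟩, fun ⟨h, ha, hb⟩ => ⟨h, ⟨hsub32 h, ha⟩, hb⟩⟩
  have hS4 : N3 ∩ N2 = N3 := Set.inter_eq_left.mpr hsub32
  have hS5 : (N3 \ N4) ∩ N3 = N3 \ N4 := Set.inter_eq_left.mpr Set.diff_subset
  have hS6 : N2 ∩ A ∩ B = B ∩ (N2 ∩ A) := by ext x; simp only [Set.mem_inter_iff]; tauto
  have hS7 : N3 ∩ A ∩ B ∩ C = C ∩ (N3 ∩ (A ∩ B)) := by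
    ext x; simp only [Set.mem_inter_iff]; tauto
  simp only [cp] at h2a h3a ⊢
  rw [hS1, hS3, hS4, hS5, hS6, hS7]
  set a := (μ A).toReal
  set n2 := (μ N2).toReal
  set n3 := (μ N3).toReal
  set e3 := (μ (N3 \ N4)).toReal
  set x := (μ (N2 ∩ A)).toReal
  set y := (μ (B ∩ (N2 ∩ A))).toReal
  set z := (μ (N3 ∩ (A ∩ B))).toReal
  set w := (μ (C ∩ (N3 ∩ (A ∩ B)))).toReal
  set v := (μ (A ∩ B ∩ C ∩ (N3 \ N4))).toReal
  have hx : x ≠ 0 := ne_of_gt posN2A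
  have hz : z ≠ 0 := ne_of_gt posN3AB
  have hy : y = pM * x := by field_simp at h2a; linarith [h2a]
  have hw : w = pM * z := by field_simp at h3a; linarith [h3a]
  rw [h1, hy, hw]
  have hp : pM ≠ 0 := ne_of_gt hpM0
  field_simp
end

section
/- (Theorem 2, inflation.) Under the random coin toss assumption, Assumption 3, Assumption 4, and the mixed-sex preference assumption p_S > p_D, the conditional probability that the first two children have the same sex, given that the family has at least 3 children, exceeds the binomial value: μ((A ∩ B) ∪ (Aᶜ ∩ Bᶜ) | N3) > p_M^2 + p_F^2. -/
open MeasureTheory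

private lemma split_meas {Ω : Type*} [MeasurableSpace Ω] (μ : Measure Ω) [IsFiniteMeasure μ]
    (s t : Set Ω) (ht : MeasurableSet t) :
    (μ (s ∩ t)).toReal + (μ (s ∩ tᶜ)).toReal = (μ s).toReal := by
  rw [← Set.diff_eq, ← ENNReal.toReal_add (measure_ne_top μ _) (measure_ne_top μ _),
    measure_inter_add_diff s ht]

set_option maxHeartbeats 1000000 in
/-- Theorem 2, inflation: under the random coin toss assumption,
Assumptions 3 and 4, and mixed-sex preference p_S > p_D,
μ((A∩B) ∪ (Aᶜ∩Bᶜ) | N3) > p_M² + p_F². -/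
theorem stmt_11 {Ω : Type*} [MeasurableSpace Ω] (μ : Measure Ω) [IsProbabilityMeasure μ]
(A B N2 N3 : Set Ω)
    (hAm : MeasurableSet A) (hBm : MeasurableSet B)
    (hN2m : MeasurableSet N2) (hN3m : MeasurableSet N3)
    (hsub : N3 ⊆ N2)
    (pM pF : ℝ) (hpM0 : 0 < pM) (hpM1 : pM < 1) (hpF : pF = 1 - pM)
    -- Assumption 1 (random coin toss):
    (h1 : (μ A).toReal = pM)
    (h2a : cp μ B (N2 ∩ A) = pM) (h2b : cp μ B (N2 ∩ Aᶜ) = pM)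
    -- Assumption 3:
    (h3 : cp μ N2 A = (μ N2).toReal)
    -- Assumption 4:
    (pS pD : ℝ) (hpS0 : 0 < pS) (hpS1 : pS ≤ 1) (hpD0 : 0 < pD) (hpD1 : pD ≤ 1)
    (h4a : cp μ N3 (N2 ∩ A ∩ B) = pS) (h4b : cp μ N3 (N2 ∩ Aᶜ ∩ Bᶜ) = pS)
    (h4c : cp μ N3 (N2 ∩ A ∩ Bᶜ) = pD) (h4d : cp μ N3 (N2 ∩ Aᶜ ∩ B) = pD)
    -- positivity of all conditioning events appearing:
    (posA : 0 < (μ A).toReal) (posN2 : 0 < (μ N2).toReal) (posN3 : 0 < (μ N3).toReal)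
    (posN2A : 0 < (μ (N2 ∩ A)).toReal) (posN2Ac : 0 < (μ (N2 ∩ Aᶜ)).toReal)
    (posN2AB : 0 < (μ (N2 ∩ A ∩ B)).toReal) (posN2AcBc : 0 < (μ (N2 ∩ Aᶜ ∩ Bᶜ)).toReal)
    (posN2ABc : 0 < (μ (N2 ∩ A ∩ Bᶜ)).toReal) (posN2AcB : 0 < (μ (N2 ∩ Aᶜ ∩ B)).toReal)
    -- Assumption 2 (mixed-sex preference):
    (h2' : pS > pD) :
    cp μ ((A ∩ B) ∪ (Aᶜ ∩ Bᶜ)) N3 > pM ^ 2 + pF ^ 2 := by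
  -- notation
  set n2 := (μ N2).toReal with hn2
  set m := (μ (N2 ∩ A)).toReal with hmdef
  set n := (μ (N2 ∩ Aᶜ)).toReal with hndef
  set a := (μ (N2 ∩ A ∩ B)).toReal with hadef
  set c := (μ (N2 ∩ A ∩ Bᶜ)).toReal with hcdef
  set d := (μ (N2 ∩ Aᶜ ∩ B)).toReal with hddef
  set b := (μ (N2 ∩ Aᶜ ∩ Bᶜ)).toReal with hbdef
  -- m = n2 * pM
  have hm : m = n2 * pM := by
    unfold cp at h3; rw [h1] at h3
    exact (div_eq_iff hpM0.ne').mp h3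
  -- m + n = n2
  have hmn : m + n = n2 := split_meas μ N2 A hAm
  -- a = pM * m, d = pM * n
  have ha : a = pM * m := by
    unfold cp at h2a
    rw [Set.inter_comm B (N2 ∩ A)] at h2a
    exact (div_eq_iff posN2A.ne').mp h2a
  have hd : d = pM * n := by
    unfold cp at h2b
    rw [Set.inter_comm B (N2 ∩ Aᶜ)] at h2b
    exact (div_eq_iff posN2Ac.ne').mp h2b
  -- a + c = m, d + b = n
  have hac : a + c = m := split_meas μ (N2 ∩ A) B hBm
  have hdb : d + b = n := split_meas μ (N2 ∩ Aᶜ) B hBm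
  -- N3 pieces
  have f1 : (μ (N3 ∩ (N2 ∩ A ∩ B))).toReal = pS * a := by
    unfold cp at h4a; exact (div_eq_iff posN2AB.ne').mp h4a
  have f2 : (μ (N3 ∩ (N2 ∩ Aᶜ ∩ Bᶜ))).toReal = pS * b := by
    unfold cp at h4b; exact (div_eq_iff posN2AcBc.ne').mp h4b
  have f3 : (μ (N3 ∩ (N2 ∩ A ∩ Bᶜ))).toReal = pD * c := by
    unfold cp at h4c; exact (div_eq_iff posN2ABc.ne').mp h4c
  have f4 : (μ (N3 ∩ (N2 ∩ Aᶜ ∩ B))).toReal = pD * d := by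
    unfold cp at h4d; exact (div_eq_iff posN2AcB.ne').mp h4d
  -- set identities using N3 ⊆ N2
  have e1 : N3 ∩ A ∩ B = N3 ∩ (N2 ∩ A ∩ B) := by
    ext x; have hx := @hsub x
    simp only [Set.mem_inter_iff]; tauto
  have e2 : N3 ∩ Aᶜ ∩ Bᶜ = N3 ∩ (N2 ∩ Aᶜ ∩ Bᶜ) := by
    ext x; have hx := @hsub x
    simp only [Set.mem_inter_iff, Set.mem_compl_iff]; tauto
  have e3 : N3 ∩ A ∩ Bᶜ = N3 ∩ (N2 ∩ A ∩ Bᶜ) := by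
    ext x; have hx := @hsub x
    simp only [Set.mem_inter_iff, Set.mem_compl_iff]; tauto
  have e4 : N3 ∩ Aᶜ ∩ B = N3 ∩ (N2 ∩ Aᶜ ∩ B) := by
    ext x; have hx := @hsub x
    simp only [Set.mem_inter_iff, Set.mem_compl_iff]; tauto
  -- μ N3 decomposition
  have hN3A : (μ (N3 ∩ A)).toReal = pS * a + pD * c := by
    rw [← split_meas μ (N3 ∩ A) B hBm, e1, e3, f1, f3]
  have hN3Ac : (μ (N3 ∩ Aᶜ)).toReal = pD * d + pS * b := by
    rw [← split_meas μ (N3 ∩ Aᶜ) B hBm, e4, e2, f4, f2]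
  have hN3 : (μ N3).toReal = pS * a + pD * c + (pD * d + pS * b) := by
    rw [← split_meas μ N3 A hAm, hN3A, hN3Ac]
  -- numerator
  have hnum : (μ (((A ∩ B) ∪ (Aᶜ ∩ Bᶜ)) ∩ N3)).toReal = pS * a + pS * b := by
    rw [Set.union_inter_distrib_right]
    have hdisj : Disjoint (A ∩ B ∩ N3) (Aᶜ ∩ Bᶜ ∩ N3) := by
      apply Set.disjoint_left.mpr
      rintro x ⟨⟨ha1, -⟩, -⟩ ⟨⟨ha2, -⟩, -⟩
      exact ha2 ha1
    rw [measure_union hdisj (((hAm.compl).inter hBm.compl).inter hN3m),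
      ENNReal.toReal_add (measure_ne_top μ _) (measure_ne_top μ _)]
    have g1 : A ∩ B ∩ N3 = N3 ∩ (N2 ∩ A ∩ B) := by
      ext x; have hx := @hsub x
      simp only [Set.mem_inter_iff]; tauto
    have g2 : Aᶜ ∩ Bᶜ ∩ N3 = N3 ∩ (N2 ∩ Aᶜ ∩ Bᶜ) := by
      ext x; have hx := @hsub x
      simp only [Set.mem_inter_iff, Set.mem_compl_iff]; tauto
    rw [g1, g2, f1, f2]
  -- final computation
  unfold cp
  rw [hnum, hN3]
  have habcd : a = pM * pM * n2 ∧ b = (1 - pM) * (1 - pM) * n2 ∧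
      c = pM * (1 - pM) * n2 ∧ d = pM * (1 - pM) * n2 := by
    constructor
    · rw [ha, hm]; ring
    constructor
    · linear_combination hdb - hd - (1 - pM) * hm + (1 - pM) * hmn
    constructor
    · linear_combination hac - ha + (1 - pM) * hm
    · linear_combination hd + pM * hmn - pM * hm
  obtain ⟨ea, eb, ec, ed⟩ := habcd
  have hden : 0 < pS * a + pD * c + (pD * d + pS * b) := by rw [← hN3]; exact posN3
  rw [gt_iff_lt, lt_div_iff₀ hden, hpF, ea, eb, ec, ed]
  have hs : 0 < pM ^ 2 + (1 - pM) ^ 2 := by positivity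
  have key : 0 < (pM ^ 2 + (1 - pM) ^ 2) * n2 * (2 * pM * (1 - pM)) * (pS - pD) :=
    mul_pos (mul_pos (mul_pos hs posN2)
      (mul_pos (by linarith : (0:ℝ) < 2 * pM) (sub_pos.mpr hpM1))) (sub_pos.mpr h2')
  linarith [key, sq_nonneg pM]
end

section
/- (Bias is larger on the probability scale when excluding the third child.) Under the random coin toss assumption, Assumption 3, Assumption 4, and the mixed-sex preference assumption p_S > p_D, the excess over the binomial value is strictly larger for the two-child same-sex pattern than for the three-child same-sex pattern: μ((A ∩ B) ∪ (Aᶜ ∩ Bᶜ) | N3) − (p_M^2 + p_F^2) > μ((A ∩ B ∩ C) ∪ (Aᶜ ∩ Bᶜ ∩ Cᶜ) | N3) − (p_M^3 + p_F^3). -/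
/-!
Write `t = μ(N2)` and `q = p_M² + p_F²`, so that `1 - q = 2 p_M p_F`. Conditioning down the
tree of sexes, the two same-sex cells of `N3` carry mass `p_S t q`, the mixed cells `p_D t (1 - q)`,
and the three-child same-sex event inside `N3` carries `p_S t (p_M³ + p_F³)`. The two conditional
probabilities thus differ by `p_S t p_M p_F / μ(N3)`, while the binomial values differ by
`q - (p_M³ + p_F³) = p_M p_F`. The claim reduces to `p_S t > μ(N3) = t (p_S q + p_D (1 - q))`,
which is the mixed-sex preference `p_S > p_D`.
-/

open MeasureTheory

section ConditionalProbability

variable {Ω : Type*} [MeasurableSpace Ω] {μ : Measure Ω}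

theorem cp_eq_measureReal_div (X Y : Set Ω) : cp μ X Y = μ.real (X ∩ Y) / μ.real Y := rfl

variable [IsFiniteMeasure μ] {X : Set Ω}

-- No positivity of `μ Y` is needed: if `μ Y = 0`, both sides vanish.
theorem measureReal_inter_eq_cp_mul (X Y : Set Ω) : μ.real (Y ∩ X) = cp μ X Y * μ.real Y := by
  rcases eq_or_ne (μ.real Y) 0 with hY | hY
  · rw [hY, mul_zero]
    exact measureReal_mono_null Set.inter_subset_left hY
  · rw [cp_eq_measureReal_div, Set.inter_comm, div_mul_cancel₀ _ hY]

theorem measureReal_inter_compl_eq_sub (hX : MeasurableSet X) (Y : Set Ω) :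
    μ.real (Y ∩ Xᶜ) = μ.real Y - μ.real (Y ∩ X) := by
  rw [← Set.sdiff_eq, ← measureReal_inter_add_sdiff (s := Y) hX, add_sub_cancel_left]

theorem measureReal_inter_compl_eq_one_sub_cp_mul (hX : MeasurableSet X) (Y : Set Ω) :
    μ.real (Y ∩ Xᶜ) = (1 - cp μ X Y) * μ.real Y := by
  rw [measureReal_inter_compl_eq_sub hX, measureReal_inter_eq_cp_mul]
  ring

theorem measureReal_inter_eq_cp_mul_of_subset {N N' : Set Ω} (h : N ⊆ N') (Z : Set Ω) :
    μ.real (N ∩ Z) = cp μ N (N' ∩ Z) * μ.real (N' ∩ Z) := by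
  rw [← measureReal_inter_eq_cp_mul, Set.inter_right_comm, Set.inter_eq_right.mpr h]

theorem measureReal_eq_sum_cells {A B : Set Ω} (hA : MeasurableSet A) (hB : MeasurableSet B)
    (N : Set Ω) :
    μ.real N = μ.real (N ∩ (A ∩ B)) + μ.real (N ∩ (A ∩ Bᶜ)) + μ.real (N ∩ (Aᶜ ∩ B))
      + μ.real (N ∩ (Aᶜ ∩ Bᶜ)) := by
  simp only [← Set.inter_assoc, measureReal_inter_compl_eq_sub hA,
    measureReal_inter_compl_eq_sub hB]
  ring

end ConditionalProbability

section SameSex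

variable {Ω : Type*} [MeasurableSpace Ω] {μ : Measure Ω} [IsFiniteMeasure μ] {A B C N : Set Ω}

theorem measureReal_sameSex₂_inter (hA : MeasurableSet A) (hB : MeasurableSet B)
    (hN : MeasurableSet N) :
    μ.real ((A ∩ B ∪ Aᶜ ∩ Bᶜ) ∩ N) = μ.real (N ∩ (A ∩ B)) + μ.real (N ∩ (Aᶜ ∩ Bᶜ)) := by
  have hdisj : Disjoint (N ∩ (A ∩ B)) (N ∩ (Aᶜ ∩ Bᶜ)) :=
    Set.disjoint_left.mpr fun _ ⟨_, hxA, _⟩ ⟨_, hxA', _⟩ => hxA' hxA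
  rw [Set.union_inter_distrib_right, Set.inter_comm _ N, Set.inter_comm _ N,
    measureReal_union hdisj (hN.inter (hA.compl.inter hB.compl))]

theorem measureReal_sameSex₃_inter (hA : MeasurableSet A) (hB : MeasurableSet B)
    (hC : MeasurableSet C) (hN : MeasurableSet N) :
    μ.real ((A ∩ B ∩ C ∪ Aᶜ ∩ Bᶜ ∩ Cᶜ) ∩ N) =
      cp μ C (N ∩ (A ∩ B)) * μ.real (N ∩ (A ∩ B))
        + (1 - cp μ C (N ∩ (Aᶜ ∩ Bᶜ))) * μ.real (N ∩ (Aᶜ ∩ Bᶜ)) := by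
  have hdisj : Disjoint (N ∩ (A ∩ B) ∩ C) (N ∩ (Aᶜ ∩ Bᶜ) ∩ Cᶜ) :=
    Set.disjoint_left.mpr fun _ ⟨⟨_, hxA, _⟩, _⟩ ⟨⟨_, hxA', _⟩, _⟩ => hxA' hxA
  have hcells : (A ∩ B ∩ C ∪ Aᶜ ∩ Bᶜ ∩ Cᶜ) ∩ N = N ∩ (A ∩ B) ∩ C ∪ N ∩ (Aᶜ ∩ Bᶜ) ∩ Cᶜ := by
    ext; simp only [Set.mem_inter_iff, Set.mem_union]; tauto
  rw [hcells, measureReal_union hdisj ((hN.inter (hA.compl.inter hB.compl)).inter hC.compl),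
    measureReal_inter_eq_cp_mul, measureReal_inter_compl_eq_one_sub_cp_mul hC]

end SameSex

theorem sameSex_excess_lt {pM pS pD t n : ℝ} (hpM0 : 0 < pM) (hpM1 : pM < 1) (ht : 0 < t)
    (hpDS : pD < pS) (hn : 0 < n)
    (hn_eq : n = t * (pS * (pM ^ 2 + (1 - pM) ^ 2) + pD * (2 * pM * (1 - pM)))) :
    pS * t * (pM ^ 3 + (1 - pM) ^ 3) / n - (pM ^ 3 + (1 - pM) ^ 3) <
      pS * t * (pM ^ 2 + (1 - pM) ^ 2) / n - (pM ^ 2 + (1 - pM) ^ 2) := by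
  have hmargin : 0 < pS * t - n := by
    rw [hn_eq]
    have : 0 < t * (2 * pM * (1 - pM)) * (pS - pD) := by
      have := sub_pos.mpr hpM1
      have := sub_pos.mpr hpDS
      positivity
    linear_combination this
  have hdiff : pS * t * (pM ^ 2 + (1 - pM) ^ 2) / n - (pM ^ 2 + (1 - pM) ^ 2)
      - (pS * t * (pM ^ 3 + (1 - pM) ^ 3) / n - (pM ^ 3 + (1 - pM) ^ 3))
      = pM * (1 - pM) * (pS * t - n) / n := by
    field_simp
    ring
  have := sub_pos.mpr hpM1
  rw [← sub_pos, hdiff]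
  positivity

theorem stmt_12_general {Ω : Type*} [MeasurableSpace Ω] (μ : Measure Ω) [IsProbabilityMeasure μ]
(A B C N2 N3 : Set Ω)
    (hAm : MeasurableSet A) (hBm : MeasurableSet B) (hCm : MeasurableSet C)
    (hN3m : MeasurableSet N3)
    (hsub : N3 ⊆ N2)
    (pM pF : ℝ) (hpM0 : 0 < pM) (hpM1 : pM < 1) (hpF : pF = 1 - pM)
    -- Assumption 1 (random coin toss):
    (h1 : (μ A).toReal = pM)
    (h2a : cp μ B (N2 ∩ A) = pM) (h2b : cp μ B (N2 ∩ Aᶜ) = pM)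
    (h3a : cp μ C (N3 ∩ (A ∩ B)) = pM)
    (h3d : cp μ C (N3 ∩ (Aᶜ ∩ Bᶜ)) = pM)
    -- Assumption 3:
    (h3' : cp μ N2 A = (μ N2).toReal)
    -- Assumption 4:
    (pS pD : ℝ)
    (h4a : cp μ N3 (N2 ∩ A ∩ B) = pS) (h4b : cp μ N3 (N2 ∩ Aᶜ ∩ Bᶜ) = pS)
    (h4c : cp μ N3 (N2 ∩ A ∩ Bᶜ) = pD) (h4d : cp μ N3 (N2 ∩ Aᶜ ∩ B) = pD)
    -- positivity of all conditioning events appearing: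
    (posN2 : 0 < (μ N2).toReal) (posN3 : 0 < (μ N3).toReal)
    -- Assumption 2 (mixed-sex preference):
    (h2' : pS > pD) :
    cp μ ((A ∩ B) ∪ (Aᶜ ∩ Bᶜ)) N3 - (pM ^ 2 + pF ^ 2) >
      cp μ ((A ∩ B ∩ C) ∪ (Aᶜ ∩ Bᶜ ∩ Cᶜ)) N3 - (pM ^ 3 + pF ^ 3) := by
  subst hpF
  simp only [← measureReal_def] at h1 h3' posN2 posN3
  set t := μ.real N2
  have hA : μ.real (N2 ∩ A) = pM * t := by
    rw [Set.inter_comm, measureReal_inter_eq_cp_mul, h3', h1, mul_comm]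
  have hAc : μ.real (N2 ∩ Aᶜ) = (1 - pM) * t := by
    rw [measureReal_inter_compl_eq_sub hAm, hA]
    ring
  have hAB : μ.real (N2 ∩ A ∩ B) = pM * (pM * t) := by
    rw [measureReal_inter_eq_cp_mul, h2a, hA]
  have hABc : μ.real (N2 ∩ A ∩ Bᶜ) = (1 - pM) * (pM * t) := by
    rw [measureReal_inter_compl_eq_one_sub_cp_mul hBm, h2a, hA]
  have hAcB : μ.real (N2 ∩ Aᶜ ∩ B) = pM * ((1 - pM) * t) := by
    rw [measureReal_inter_eq_cp_mul, h2b, hAc]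
  have hAcBc : μ.real (N2 ∩ Aᶜ ∩ Bᶜ) = (1 - pM) * ((1 - pM) * t) := by
    rw [measureReal_inter_compl_eq_one_sub_cp_mul hBm, h2b, hAc]
  have hcell (X Y : Set Ω) :
      μ.real (N3 ∩ (X ∩ Y)) = cp μ N3 (N2 ∩ X ∩ Y) * μ.real (N2 ∩ X ∩ Y) := by
    rw [measureReal_inter_eq_cp_mul_of_subset hsub, Set.inter_assoc]
  have hN3 : μ.real N3 = t * (pS * (pM ^ 2 + (1 - pM) ^ 2) + pD * (2 * pM * (1 - pM))) := by
    rw [measureReal_eq_sum_cells hAm hBm, hcell, hcell, hcell, hcell, h4a, h4b, h4c, h4d, hAB,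
      hABc, hAcB, hAcBc]
    ring
  rw [gt_iff_lt, cp_eq_measureReal_div, cp_eq_measureReal_div,
    measureReal_sameSex₂_inter hAm hBm hN3m, measureReal_sameSex₃_inter hAm hBm hCm hN3m, h3a,
    h3d, hcell, hcell, h4a, h4b, hAB, hAcBc]
  convert sameSex_excess_lt hpM0 hpM1 posN2 h2' posN3 hN3 using 2 <;> ring

/-- under the random coin toss assumption, Assumptions 3 and 4, and
mixed-sex preference p_S > p_D, the excess over the binomial value is strictly larger
for the two-child same-sex pattern than for the three-child same-sex pattern. -/
theorem stmt_12 {Ω : Type*} [MeasurableSpace Ω] (μ : Measure Ω) [IsProbabilityMeasure μ]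
(A B C N2 N3 : Set Ω)
    (hAm : MeasurableSet A) (hBm : MeasurableSet B) (hCm : MeasurableSet C)
    (hN2m : MeasurableSet N2) (hN3m : MeasurableSet N3)
    (hsub : N3 ⊆ N2)
    (pM pF : ℝ) (hpM0 : 0 < pM) (hpM1 : pM < 1) (hpF : pF = 1 - pM)
    -- Assumption 1 (random coin toss):
    (h1 : (μ A).toReal = pM)
    (h2a : cp μ B (N2 ∩ A) = pM) (h2b : cp μ B (N2 ∩ Aᶜ) = pM)
    (h3a : cp μ C (N3 ∩ (A ∩ B)) = pM) (h3b : cp μ C (N3 ∩ (A ∩ Bᶜ)) = pM)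
    (h3c : cp μ C (N3 ∩ (Aᶜ ∩ B)) = pM) (h3d : cp μ C (N3 ∩ (Aᶜ ∩ Bᶜ)) = pM)
    -- Assumption 3:
    (h3' : cp μ N2 A = (μ N2).toReal)
    -- Assumption 4:
    (pS pD : ℝ) (hpS0 : 0 < pS) (hpS1 : pS ≤ 1) (hpD0 : 0 < pD) (hpD1 : pD ≤ 1)
    (h4a : cp μ N3 (N2 ∩ A ∩ B) = pS) (h4b : cp μ N3 (N2 ∩ Aᶜ ∩ Bᶜ) = pS)
    (h4c : cp μ N3 (N2 ∩ A ∩ Bᶜ) = pD) (h4d : cp μ N3 (N2 ∩ Aᶜ ∩ B) = pD)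
    -- positivity of all conditioning events appearing:
    (posA : 0 < (μ A).toReal) (posN2 : 0 < (μ N2).toReal) (posN3 : 0 < (μ N3).toReal)
    (posN2A : 0 < (μ (N2 ∩ A)).toReal) (posN2Ac : 0 < (μ (N2 ∩ Aᶜ)).toReal)
    (posN2AB : 0 < (μ (N2 ∩ A ∩ B)).toReal) (posN2AcBc : 0 < (μ (N2 ∩ Aᶜ ∩ Bᶜ)).toReal)
    (posN2ABc : 0 < (μ (N2 ∩ A ∩ Bᶜ)).toReal) (posN2AcB : 0 < (μ (N2 ∩ Aᶜ ∩ B)).toReal)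
    (posN3AB : 0 < (μ (N3 ∩ (A ∩ B))).toReal) (posN3ABc : 0 < (μ (N3 ∩ (A ∩ Bᶜ))).toReal)
    (posN3AcB : 0 < (μ (N3 ∩ (Aᶜ ∩ B))).toReal) (posN3AcBc : 0 < (μ (N3 ∩ (Aᶜ ∩ Bᶜ))).toReal)
    -- Assumption 2 (mixed-sex preference):
    (h2' : pS > pD) :
    cp μ ((A ∩ B) ∪ (Aᶜ ∩ Bᶜ)) N3 - (pM ^ 2 + pF ^ 2) >
      cp μ ((A ∩ B ∩ C) ∪ (Aᶜ ∩ Bᶜ ∩ Cᶜ)) N3 - (pM ^ 3 + pF ^ 3) :=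
  stmt_12_general μ A B C N2 N3 hAm hBm hCm hN3m hsub pM pF hpM0 hpM1 hpF h1 h2a h2b h3a h3d h3' pS
    pD h4a h4b h4c h4d posN2 posN3 h2'
end
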